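/- Let θ ∈ (0, π/2] and define λ₁ = 2/(3+3cos θ), λ₂ = λ₃ = (2+3cos θ)/(3+3cos θ), μ = 1/(2+3cos θ), and β₁ = (λ₁/2)(I + Z), β₂ = (λ₂/2)(I − μZ + sqrt(1−μ²)X), β₃ = (λ₃/2)(I − μZ − sqrt(1−μ²)X). Then {β₁, β₂, β₃} is a POVM on ℂ², each β_b is of rank one, and Tr[β_b ρ] = 1/3 for all b, where ρ = (1/2)(I + cos θ · Z). -/

import Mathlib

open Matrix
open scoped ComplexOrder

noncomputable def PauliX : Matrix (Fin 2) (Fin 2) ℂ := !![0, 1; 1, 0]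
noncomputable def PauliZ : Matrix (Fin 2) (Fin 2) ℂ := !![1, 0; 0, -1]

noncomputable def lamB1 (θ : ℝ) : ℝ := 2 / (3 + 3 * Real.cos θ)
noncomputable def lamB2 (θ : ℝ) : ℝ := (2 + 3 * Real.cos θ) / (3 + 3 * Real.cos θ)
noncomputable def muB (θ : ℝ) : ℝ := 1 / (2 + 3 * Real.cos θ)

/-- The modified Mercedes-Benz POVM. -/
noncomputable def betaB (θ : ℝ) : Fin 3 → Matrix (Fin 2) (Fin 2) ℂ := fun b =>
  if b = 0 then ((lamB1 θ / 2 : ℝ) : ℂ) • ((1 : Matrix (Fin 2) (Fin 2) ℂ) + PauliZ)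
  else if b = 1 then ((lamB2 θ / 2 : ℝ) : ℂ) •
    ((1 : Matrix (Fin 2) (Fin 2) ℂ) - (muB θ : ℂ) • PauliZ
      + (Real.sqrt (1 - muB θ ^ 2) : ℂ) • PauliX)
  else ((lamB2 θ / 2 : ℝ) : ℂ) •
    ((1 : Matrix (Fin 2) (Fin 2) ℂ) - (muB θ : ℂ) • PauliZ
      - (Real.sqrt (1 - muB θ ^ 2) : ℂ) • PauliX)

/-- Bob's reduced state of `|ψ_θ⟩`. -/
noncomputable def rhoB (θ : ℝ) : Matrix (Fin 2) (Fin 2) ℂ :=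
  (1 / 2 : ℂ) • ((1 : Matrix (Fin 2) (Fin 2) ℂ) + (Real.cos θ : ℂ) • PauliZ)

lemma matrix_rank_ne_zero {m n : ℕ} {A : Matrix (Fin m) (Fin n) ℂ} (h : A ≠ 0) :
    A.rank ≠ 0 := by
  intro h0
  apply h
  have hbot : LinearMap.range A.mulVecLin = ⊥ := Submodule.finrank_eq_zero.mp h0
  have hz : A.mulVecLin = 0 := LinearMap.range_eq_bot.mp hbot
  ext i j
  have hv : A.mulVec (Pi.single j 1) = 0 := by
    have := congrArg (fun f => f (Pi.single j 1)) hz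
    simpa [Matrix.mulVecLin] using this
  have := congrFun hv i
  simpa [Matrix.mulVec_single] using this

lemma matrix_rank_one_of_col {A : Matrix (Fin 2) (Fin 2) ℂ} {B : Matrix (Fin 2) (Fin 1) ℂ}
    (hA : A = B * Bᴴ) (hB : B ≠ 0) : A.rank = 1 := by
  have h1 : A.rank = B.rank := by rw [hA, Matrix.rank_self_mul_conjTranspose]
  have h2 : B.rank ≤ 1 := by
    simpa using B.rank_le_card_width
  have h3 := matrix_rank_ne_zero hB
  omega

lemma beta0_eq (θ : ℝ) : betaB θ 0 = !![((lamB1 θ : ℝ) : ℂ), 0; 0, 0] := by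
  ext i j
  fin_cases i <;> fin_cases j <;>
    simp [betaB, PauliZ, Matrix.one_apply] <;> push_cast <;> ring

lemma beta1_eq (θ : ℝ) : betaB θ 1 =
    !![((lamB2 θ / 2 * (1 - muB θ) : ℝ) : ℂ),
        ((lamB2 θ / 2 * Real.sqrt (1 - muB θ ^ 2) : ℝ) : ℂ);
       ((lamB2 θ / 2 * Real.sqrt (1 - muB θ ^ 2) : ℝ) : ℂ),
        ((lamB2 θ / 2 * (1 + muB θ) : ℝ) : ℂ)] := by
  ext i j
  fin_cases i <;> fin_cases j <;>
    simp [betaB, PauliZ, PauliX, Matrix.one_apply] <;> push_cast <;> ring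

lemma beta2_eq (θ : ℝ) : betaB θ 2 =
    !![((lamB2 θ / 2 * (1 - muB θ) : ℝ) : ℂ),
        ((-(lamB2 θ / 2 * Real.sqrt (1 - muB θ ^ 2)) : ℝ) : ℂ);
       ((-(lamB2 θ / 2 * Real.sqrt (1 - muB θ ^ 2)) : ℝ) : ℂ),
        ((lamB2 θ / 2 * (1 + muB θ) : ℝ) : ℂ)] := by
  ext i j
  fin_cases i <;> fin_cases j <;>
    simp [betaB, PauliZ, PauliX, Matrix.one_apply] <;> push_cast <;> ring

lemma rho_eq (θ : ℝ) : rhoB θ =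
    !![(((1 + Real.cos θ) / 2 : ℝ) : ℂ), 0; 0, (((1 - Real.cos θ) / 2 : ℝ) : ℂ)] := by
  ext i j
  fin_cases i <;> fin_cases j <;>
    simp [rhoB, PauliZ, Matrix.one_apply] <;> push_cast <;> ring

lemma betaB_sum (θ : ℝ) (h3 : (0:ℝ) < 3 + 3 * Real.cos θ) (h23 : (0:ℝ) < 2 + 3 * Real.cos θ) :
    (∑ b, betaB θ b) = 1 := by
  rw [Fin.sum_univ_three, beta0_eq, beta1_eq, beta2_eq]
  simp only [lamB1, lamB2, muB]
  obtain ⟨c, hcc⟩ : ∃ c, Real.cos θ = c := ⟨_, rfl⟩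
  rw [hcc] at h3 h23 ⊢
  have hC3 : ((3:ℂ) + 3 * (c:ℂ)) ≠ 0 := by exact_mod_cast h3.ne'
  have hC23 : ((2:ℂ) + 3 * (c:ℂ)) ≠ 0 := by exact_mod_cast h23.ne'
  have hC1 : ((1:ℂ) + (c:ℂ)) ≠ 0 := by exact_mod_cast (show (1:ℝ) + c ≠ 0 by linarith)
  ext i j
  fin_cases i <;> fin_cases j <;> simp [Matrix.one_apply] <;>
    push_cast <;> field_simp [hC3, hC23, hC1] <;> ring

set_option maxHeartbeats 1000000 in
lemma betaB_trace (θ : ℝ) (h3 : (0:ℝ) < 3 + 3 * Real.cos θ) (h23 : (0:ℝ) < 2 + 3 * Real.cos θ) :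
    ∀ b, (betaB θ b * rhoB θ).trace = 1 / 3 := by
  intro b
  match b with
  | 0 =>
    rw [beta0_eq, rho_eq, Matrix.mul_fin_two, Matrix.trace_fin_two]
    simp only [lamB1, lamB2, muB]
    obtain ⟨c, hcc⟩ : ∃ c, Real.cos θ = c := ⟨_, rfl⟩
    rw [hcc] at h3 h23 ⊢
    have hC3 : ((3:ℂ) + 3 * (c:ℂ)) ≠ 0 := by exact_mod_cast h3.ne'
    have hC23 : ((2:ℂ) + 3 * (c:ℂ)) ≠ 0 := by exact_mod_cast h23.ne'
    have hC1 : ((1:ℂ) + (c:ℂ)) ≠ 0 := by exact_mod_cast (show (1:ℝ) + c ≠ 0 by linarith)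
    simp only [Matrix.cons_val_zero, Matrix.cons_val_one, Matrix.head_cons, Matrix.of_apply,
      Matrix.cons_val', Matrix.empty_val', Matrix.cons_val_fin_one, Matrix.head_fin_const]
    push_cast
    field_simp [hC3, hC23, hC1]
    ring
  | 1 =>
    rw [beta1_eq, rho_eq, Matrix.mul_fin_two, Matrix.trace_fin_two]
    simp only [lamB1, lamB2, muB]
    obtain ⟨c, hcc⟩ : ∃ c, Real.cos θ = c := ⟨_, rfl⟩
    rw [hcc] at h3 h23 ⊢
    have hC3 : ((3:ℂ) + 3 * (c:ℂ)) ≠ 0 := by exact_mod_cast h3.ne'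
    have hC23 : ((2:ℂ) + 3 * (c:ℂ)) ≠ 0 := by exact_mod_cast h23.ne'
    have hC1 : ((1:ℂ) + (c:ℂ)) ≠ 0 := by exact_mod_cast (show (1:ℝ) + c ≠ 0 by linarith)
    obtain ⟨s, hs⟩ : ∃ s', Real.sqrt (1 - (1 / (2 + 3 * c)) ^ 2) = s' := ⟨_, rfl⟩
    rw [hs]
    simp only [Matrix.cons_val_zero, Matrix.cons_val_one, Matrix.head_cons, Matrix.of_apply,
      Matrix.cons_val', Matrix.empty_val', Matrix.cons_val_fin_one, Matrix.head_fin_const]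
    push_cast
    field_simp [hC3, hC23, hC1]
    ring
  | 2 =>
    rw [beta2_eq, rho_eq, Matrix.mul_fin_two, Matrix.trace_fin_two]
    simp only [lamB1, lamB2, muB]
    obtain ⟨c, hcc⟩ : ∃ c, Real.cos θ = c := ⟨_, rfl⟩
    rw [hcc] at h3 h23 ⊢
    have hC3 : ((3:ℂ) + 3 * (c:ℂ)) ≠ 0 := by exact_mod_cast h3.ne'
    have hC23 : ((2:ℂ) + 3 * (c:ℂ)) ≠ 0 := by exact_mod_cast h23.ne'
    have hC1 : ((1:ℂ) + (c:ℂ)) ≠ 0 := by exact_mod_cast (show (1:ℝ) + c ≠ 0 by linarith)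
    obtain ⟨s, hs⟩ : ∃ s', Real.sqrt (1 - (1 / (2 + 3 * c)) ^ 2) = s' := ⟨_, rfl⟩
    rw [hs]
    simp only [Matrix.cons_val_zero, Matrix.cons_val_one, Matrix.head_cons, Matrix.of_apply,
      Matrix.cons_val', Matrix.empty_val', Matrix.cons_val_fin_one, Matrix.head_fin_const]
    push_cast
    field_simp [hC3, hC23, hC1]
    ring

/-- The modified Mercedes-Benz measurement is a rank-one POVM giving uniform outcome
probabilities `1/3` on the reduced state of `|ψ_θ⟩`. -/
theorem betaB_povm_uniform (θ : ℝ) (h1 : 0 < θ) (h2 : θ ≤ Real.pi / 2) :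
    (∀ b, (betaB θ b).PosSemidef) ∧ (∑ b, betaB θ b) = 1
      ∧ (∀ b, (betaB θ b).rank = 1)
      ∧ ∀ b, (betaB θ b * rhoB θ).trace = 1 / 3 := by
  have hπ := Real.pi_pos
  have hc0 : 0 ≤ Real.cos θ := Real.cos_nonneg_of_mem_Icc ⟨by linarith, h2⟩
  have h3 : (0:ℝ) < 3 + 3 * Real.cos θ := by linarith
  have h23 : (0:ℝ) < 2 + 3 * Real.cos θ := by linarith
  have hμ : muB θ = 1 / (2 + 3 * Real.cos θ) := rfl
  have hμpos : 0 < muB θ := by rw [hμ]; positivity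
  have hμle : muB θ ≤ 1 / 2 := by
    rw [hμ, div_le_div_iff₀ h23 (by norm_num)]; linarith
  have hl2 : 0 < lamB2 θ := by rw [lamB2]; positivity
  have hs2 : 0 ≤ 1 - muB θ ^ 2 := by nlinarith
  set s := Real.sqrt (1 - muB θ ^ 2) with hsdef
  set x := lamB2 θ / 2 * (1 - muB θ) with hxdef
  set y := lamB2 θ / 2 * (1 + muB θ) with hydef
  have hx : 0 < x := by rw [hxdef]; nlinarith
  have hy : 0 < y := by rw [hydef]; nlinarith
  have hxy : Real.sqrt x * Real.sqrt y = lamB2 θ / 2 * s := by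
    rw [← Real.sqrt_mul hx.le, show x * y = (lamB2 θ / 2) ^ 2 * (1 - muB θ ^ 2) by
      rw [hxdef, hydef]; ring, Real.sqrt_mul (sq_nonneg _), Real.sqrt_sq (by positivity)]
  have hB0 : betaB θ 0 =
      (!![(Real.sqrt (lamB1 θ) : ℂ); 0]) * (!![(Real.sqrt (lamB1 θ) : ℂ); 0])ᴴ := by
    rw [beta0_eq]
    ext i j
    fin_cases i <;> fin_cases j <;>
      simp [Matrix.mul_apply, Fin.sum_univ_one, ← Complex.ofReal_mul,
        Real.mul_self_sqrt (show (0:ℝ) ≤ lamB1 θ by rw [lamB1]; positivity)]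
  have hB1 : betaB θ 1 =
      (!![(Real.sqrt x : ℂ); (Real.sqrt y : ℂ)])
        * (!![(Real.sqrt x : ℂ); (Real.sqrt y : ℂ)])ᴴ := by
    rw [beta1_eq]
    ext i j
    fin_cases i <;> fin_cases j <;>
      simp [Matrix.mul_apply, Fin.sum_univ_one, ← Complex.ofReal_mul,
        Real.mul_self_sqrt hx.le, Real.mul_self_sqrt hy.le, hxy, mul_comm (Real.sqrt y)] <;>
        simp [hxdef, hydef, hsdef]
  have hB2 : betaB θ 2 =
      (!![(Real.sqrt x : ℂ); (-(Real.sqrt y) : ℝ)])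
        * (!![(Real.sqrt x : ℂ); (-(Real.sqrt y) : ℝ)])ᴴ := by
    rw [beta2_eq]
    ext i j
    fin_cases i <;> fin_cases j <;>
      simp [Matrix.mul_apply, Fin.sum_univ_one, ← Complex.ofReal_mul, ← Complex.ofReal_neg,
        Real.mul_self_sqrt hx.le, Real.mul_self_sqrt hy.le, hxy, mul_comm (Real.sqrt y)] <;>
        simp [hxdef, hydef, hsdef]
  have hne0 : (!![(Real.sqrt (lamB1 θ) : ℂ); 0] : Matrix (Fin 2) (Fin 1) ℂ) ≠ 0 := by
    intro hz
    have := congrFun (congrFun hz 0) 0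
    simp [Real.sqrt_eq_zero'] at this
    rw [lamB1] at this
    have h' : (0:ℝ) < 2 / (3 + 3 * Real.cos θ) := by positivity
    linarith
  have hne1 : (!![(Real.sqrt x : ℂ); (Real.sqrt y : ℂ)] : Matrix (Fin 2) (Fin 1) ℂ) ≠ 0 := by
    intro hz
    have := congrFun (congrFun hz 0) 0
    simp [Real.sqrt_eq_zero'] at this
    nlinarith
  have hne2 : (!![(Real.sqrt x : ℂ); (-(Real.sqrt y) : ℝ)] : Matrix (Fin 2) (Fin 1) ℂ) ≠ 0 := by
    intro hz
    have := congrFun (congrFun hz 0) 0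
    simp [Real.sqrt_eq_zero'] at this
    nlinarith
  refine ⟨?_, betaB_sum θ h3 h23, ?_, betaB_trace θ h3 h23⟩
  · intro b
    match b with
    | 0 => rw [hB0]; exact Matrix.posSemidef_self_mul_conjTranspose _
    | 1 => rw [hB1]; exact Matrix.posSemidef_self_mul_conjTranspose _
    | 2 => rw [hB2]; exact Matrix.posSemidef_self_mul_conjTranspose _
  · intro b
    match b with
    | 0 => exact matrix_rank_one_of_col hB0 hne0
    | 1 => exact matrix_rank_one_of_col hB1 hne1
    | 2 => exact matrix_rank_one_of_col hB2 hne2
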